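/- For any complex numbers λ and β, and any real ω ≥ max{|λ|, |β|}, we have |exp(λ) − 1 − β| ≤ (|λ − β| + |β|²/2)·exp(ω). -/

import Mathlib

open intervalIntegral

lemma exp_lip (ω : ℝ) (z w : ℂ) (hz : ‖z‖ ≤ ω) (hw : ‖w‖ ≤ ω) :
    ‖Complex.exp z - Complex.exp w‖ ≤ Real.exp ω * ‖z - w‖ := by
  have := Convex.norm_image_sub_le_of_norm_hasFDerivWithin_le
    (f := Complex.exp) (s := Metric.closedBall (0:ℂ) ω)
    (f' := fun x => ContinuousLinearMap.smulRight (1 : ℂ →L[ℂ] ℂ) (Complex.exp x))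
    (C := Real.exp ω) (x := w) (y := z)
    (fun x _ => (Complex.hasDerivAt_exp x).hasFDerivAt.hasFDerivWithinAt)
    (fun x hx => by
      rw [ContinuousLinearMap.norm_smulRight_apply]
      simp only [norm_one, one_mul]
      calc ‖Complex.exp x‖ = Real.exp x.re := by
              simp [Complex.norm_exp]
        _ ≤ Real.exp ω := by
              apply Real.exp_le_exp.mpr
              calc x.re ≤ ‖x‖ := Complex.re_le_norm x
                _ ≤ ω := by simpa using hx)
    (convex_closedBall _ _)
    (by simpa using hw) (by simpa using hz)
  exact this

/-- For any complex numbers λ and β, and any real ω ≥ max{|λ|, |β|},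
|exp(λ) − 1 − β| ≤ (|λ − β| + |β|²/2)·exp(ω). -/
theorem stmt0 (l b : ℂ) (ω : ℝ) (hω : max ‖l‖ ‖b‖ ≤ ω) :
    ‖Complex.exp l - 1 - b‖ ≤ (‖l - b‖ + ‖b‖ ^ 2 / 2) * Real.exp ω := by
  have hl : ‖l‖ ≤ ω := le_trans (le_max_left _ _) hω
  have hb : ‖b‖ ≤ ω := le_trans (le_max_right _ _) hω
  have hω0 : 0 ≤ ω := le_trans (norm_nonneg l) hl
  -- part 1
  have h1 : ‖Complex.exp l - Complex.exp b‖ ≤ ‖l - b‖ * Real.exp ω := by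
    rw [mul_comm]; exact exp_lip ω l b hl hb
  -- part 2 : ‖exp b - 1 - b‖ ≤ ‖b‖^2/2 * exp ω
  have h2 : ‖Complex.exp b - 1 - b‖ ≤ ‖b‖ ^ 2 / 2 * Real.exp ω := by
    set F : ℝ → ℂ := fun t => Complex.exp (t * b) - t * b
    have hF : ∀ t ∈ Set.uIcc (0:ℝ) 1, HasDerivAt F (b * (Complex.exp (t * b) - 1)) t := by
      intro t _
      have h1 : HasDerivAt (fun t : ℝ => (t : ℂ) * b) b t := by
        simpa using (Complex.ofRealCLM.hasDerivAt (x := t)).mul_const b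
      have h2 : HasDerivAt (fun t : ℝ => Complex.exp (t * b)) (Complex.exp (t * b) * b) t :=
        (Complex.hasDerivAt_exp _).comp t h1
      have := h2.sub h1
      exact this.congr_deriv (by ring)
    have hcont : IntervalIntegrable (fun t => b * (Complex.exp (t * b) - 1))
        MeasureTheory.volume 0 1 := by
      apply Continuous.intervalIntegrable
      continuity
    have heq : ∫ t in (0:ℝ)..1, b * (Complex.exp (t * b) - 1) = Complex.exp b - 1 - b := by
      rw [intervalIntegral.integral_eq_sub_of_hasDerivAt hF hcont]
      simp [F]
      ring
    rw [← heq]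
    have hbound : ∀ t ∈ Set.Icc (0:ℝ) 1,
        ‖b * (Complex.exp (t * b) - 1)‖ ≤ ‖b‖ ^ 2 * Real.exp ω * t := by
      intro t ht
      rw [norm_mul]
      have : ‖Complex.exp (t * b) - 1‖ ≤ Real.exp ω * (t * ‖b‖) := by
        have := exp_lip ω (t * b) 0 (by
          rw [norm_mul, Complex.norm_real, Real.norm_of_nonneg ht.1]
          calc t * ‖b‖ ≤ 1 * ω := by
                exact mul_le_mul ht.2 hb (norm_nonneg b) one_pos.le
            _ = ω := one_mul ω) (by simpa using hω0)
        simpa [norm_mul, Complex.norm_real, Real.norm_of_nonneg ht.1, abs_of_nonneg ht.1] using this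
      calc ‖b‖ * ‖Complex.exp (t * b) - 1‖ ≤ ‖b‖ * (Real.exp ω * (t * ‖b‖)) :=
            mul_le_mul_of_nonneg_left this (norm_nonneg b)
        _ = ‖b‖ ^ 2 * Real.exp ω * t := by ring
    calc ‖∫ t in (0:ℝ)..1, b * (Complex.exp (t * b) - 1)‖
        ≤ |∫ t in (0:ℝ)..1, ‖b‖ ^ 2 * Real.exp ω * t| := by
          apply intervalIntegral.norm_integral_le_abs_of_norm_le
          · filter_upwards [MeasureTheory.ae_restrict_mem measurableSet_Ioc] with t ht
            rw [Set.uIoc_of_le zero_le_one] at ht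
            exact hbound t ⟨ht.1.le, ht.2⟩
          · apply Continuous.intervalIntegrable; continuity
      _ = ‖b‖ ^ 2 / 2 * Real.exp ω := by
          rw [intervalIntegral.integral_const_mul, integral_id, abs_of_nonneg (by positivity)]
          ring
  calc ‖Complex.exp l - 1 - b‖
      = ‖(Complex.exp l - Complex.exp b) + (Complex.exp b - 1 - b)‖ := by ring_nf
    _ ≤ ‖Complex.exp l - Complex.exp b‖ + ‖Complex.exp b - 1 - b‖ := norm_add_le _ _
    _ ≤ ‖l - b‖ * Real.exp ω + ‖b‖ ^ 2 / 2 * Real.exp ω := add_le_add h1 h2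
    _ = (‖l - b‖ + ‖b‖ ^ 2 / 2) * Real.exp ω := by ring
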